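/- For $i \in \{1,2\}$ let $\mu_i \in \mathbb{R}$, $s_i > 0$, and $\hat{\gamma}_i, \tilde{\gamma}_i > 0$ with $\hat{\gamma}_i > 2 s_i^2 \tilde{\gamma}_i$. Let $H_1 \sim \mathcal{N}(\mu_1, s_1^2)$, $H_2 \sim \mathcal{N}(\mu_2, s_2^2)$, and $E_1, E_2$ be rate-$1$ exponential random variables, with $E_1, E_2, H_1, H_2$ mutually independent, and set $\gamma_i = \hat{\gamma}_i E_i + \tilde{\gamma}_i H_i^2$. Then for every target rate $R_t > 0$, writing $\gamma_t = 2^{R_t} - 1$, the outage probability satisfies $\Pr\big(\log_2(1 + \min\{\gamma_1, \gamma_2\}) \leq R_t\big) = 1 - \prod_{i=1}^{2}\Big(1 - \sum_{l=0}^{\infty} \frac{\beta_{il}}{\zeta_i^{\kappa_l}}\, \gamma_{\ell}\Big(\kappa_l, \frac{\zeta_i \gamma_t}{\tilde{\gamma}_i}\Big) + e^{-\gamma_t/\hat{\gamma}_i} \sum_{l=0}^{\infty} \frac{\beta_{il}}{\omega_i^{\kappa_l}}\, \gamma_{\ell}\Big(\kappa_l, \frac{\omega_i \gamma_t}{\tilde{\gamma}_i}\Big)\Big)$,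 where $\zeta_i = 1/(2 s_i^2)$, $\omega_i = \zeta_i - \tilde{\gamma}_i/\hat{\gamma}_i$, $\kappa_l = l + 1/2$, $\beta_{il} = \dfrac{e^{-\mu_i^2/(2 s_i^2)}\, \mu_i^{2l}}{(2 s_i^2)^{2l + 1/2} \; l! \; \Gamma(l + 1/2)}$, and $\gamma_{\ell}(\kappa, x) = \int_0^x u^{\kappa - 1} e^{-u}\, du$ is the lower incomplete gamma function. -/

import Mathlib

open Real MeasureTheory ProbabilityTheory
open scoped ENNReal NNReal

/-- The lower incomplete gamma function `γ(κ, x) = ∫_0^x u^(κ-1) e^(-u) du`. -/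
noncomputable def lowerIncGamma (κ x : ℝ) : ℝ :=
  ∫ u in (0:ℝ)..x, u ^ (κ - 1) * Real.exp (-u)

/-- Mixture coefficient `β_l = e^(-m²/(2s²)) m^(2l) / ((2s²)^(2l+1/2) l! Γ(l+1/2))`. -/
noncomputable def mixCoeff (m s : ℝ) (l : ℕ) : ℝ :=
  Real.exp (-m ^ 2 / (2 * s ^ 2)) * m ^ (2 * l) /
    ((2 * s ^ 2) ^ ((2 * (l : ℝ)) + 1 / 2) * (Nat.factorial l) *
      Real.Gamma ((l : ℝ) + 1 / 2))

lemma Gamma_nat_add_half' (n : ℕ) :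
    Real.Gamma ((n : ℝ) + 1 / 2) =
      (Nat.factorial (2 * n)) * Real.sqrt π / (4 ^ n * Nat.factorial n) := by
  induction n with
  | zero => norm_num [Real.Gamma_one_half_eq]
  | succ n ih =>
      have h1 : ((n : ℝ) + 1) + 1 / 2 = ((n : ℝ) + 1 / 2) + 1 := by ring
      have h2 : Real.Gamma (((n : ℝ) + 1 / 2) + 1)
          = ((n : ℝ) + 1 / 2) * Real.Gamma ((n : ℝ) + 1 / 2) :=
        Real.Gamma_add_one (by positivity)
      push_cast
      rw [h1, h2, ih]
      have h3 : (Nat.factorial (2 * (n + 1)) : ℝ)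
          = (2 * n + 2) * (2 * n + 1) * Nat.factorial (2 * n) := by
        have : 2 * (n + 1) = (2 * n + 1) + 1 := by ring
        rw [this, Nat.factorial_succ, Nat.factorial_succ]
        push_cast; ring
      have h4 : (Nat.factorial (n + 1) : ℝ) = (n + 1) * Nat.factorial n := by
        rw [Nat.factorial_succ]; push_cast; ring
      rw [h3, h4]
      have hn : (Nat.factorial n : ℝ) ≠ 0 := by positivity
      field_simp
      ring


lemma mixCoeff_eq {s : ℝ} (hs : 0 < s) (m : ℝ) (l : ℕ) :
    mixCoeff m s l = Real.exp (-m ^ 2 / (2 * s ^ 2)) / (s * Real.sqrt (2 * π)) *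
      ((m / s ^ 2) ^ (2 * l) / (Nat.factorial (2 * l))) := by
  have h2s : (0:ℝ) < 2 * s ^ 2 := by positivity
  have hrw : (2 * s ^ 2 : ℝ) ^ ((2 * (l : ℝ)) + 1 / 2)
      = (2 * s ^ 2) ^ (2 * l) * Real.sqrt (2 * s ^ 2) := by
    rw [Real.rpow_add h2s, ← Real.rpow_natCast (2 * s ^ 2) (2 * l),
      Real.sqrt_eq_rpow]
    push_cast
    ring_nf
  have hsq2 : Real.sqrt (2 * s ^ 2) = Real.sqrt 2 * s := by
    rw [Real.sqrt_mul (by norm_num), Real.sqrt_sq hs.le]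
  have hsqpi : Real.sqrt (2 * π) = Real.sqrt 2 * Real.sqrt π := by
    rw [Real.sqrt_mul (by norm_num)]
  have hfac : (Nat.factorial l : ℝ) ≠ 0 := by positivity
  have hfac2 : (Nat.factorial (2 * l) : ℝ) ≠ 0 := by positivity
  have hsppos : (0:ℝ) < Real.sqrt π := Real.sqrt_pos.mpr Real.pi_pos
  have hs2pos : (0:ℝ) < Real.sqrt 2 := by positivity
  unfold mixCoeff
  rw [hrw, hsq2, hsqpi, Gamma_nat_add_half', mul_pow]
  rw [div_pow m (s^2), ← pow_mul s 2 (2*l)]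
  have h4 : ((2:ℝ))^(2*l) = 4 ^ l := by
    rw [pow_mul]; norm_num
  rw [h4]
  have hs4 : (s:ℝ) ^ (2 * (2*l)) ≠ 0 := by positivity
  have h4l : (4:ℝ) ^ l ≠ 0 := by positivity
  field_simp

lemma hasSum_mix {s : ℝ} (hs : 0 < s) (m h : ℝ) :
    HasSum (fun l : ℕ => mixCoeff m s l * h ^ (2 * l))
      (Real.exp (-m ^ 2 / (2 * s ^ 2)) / (s * Real.sqrt (2 * π)) *
        Real.cosh (m * h / s ^ 2)) := by
  have h1 := (Real.hasSum_cosh (m * h / s ^ 2)).mul_left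
    (Real.exp (-m ^ 2 / (2 * s ^ 2)) / (s * Real.sqrt (2 * π)))
  have hf : ∀ l : ℕ, mixCoeff m s l * h ^ (2 * l) = Real.exp (-m ^ 2 / (2 * s ^ 2)) /
      (s * Real.sqrt (2 * π)) * ((m * h / s ^ 2) ^ (2 * l) / (Nat.factorial (2 * l))) := by
    intro l
    rw [mixCoeff_eq hs, div_pow (m*h) (s^2), mul_pow m h]
    ring
  rw [show (fun l : ℕ => mixCoeff m s l * h ^ (2 * l)) = _ from funext hf]
  exact h1

lemma lig_eq {α z : ℝ} (hα : 0 < α) (hz : 0 ≤ z) (l : ℕ) :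
    lowerIncGamma ((l : ℝ) + 1 / 2) (α * z)
      = α ^ ((l : ℝ) + 1 / 2) *
        ∫ h in (0:ℝ)..Real.sqrt z, 2 * h ^ (2 * l) * Real.exp (-(α * h ^ 2)) := by
  set κ : ℝ := (l : ℝ) + 1 / 2 with hκ
  have hκ1 : κ - 1 ≠ 0 := by
    have : κ - 1 = (l : ℝ) - 1/2 := by rw [hκ]; ring
    rw [this]
    intro hc
    have : (l : ℝ) = 1/2 := by linarith
    rcases Nat.eq_zero_or_pos l with h0 | h0
    · rw [h0] at this; norm_num at this
    · have : (1:ℝ) ≤ (l:ℝ) := by exact_mod_cast h0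
      linarith [‹(l : ℝ) = 1/2›]
  have hrz : 0 ≤ Real.sqrt z := Real.sqrt_nonneg z
  set g : ℝ → ℝ := fun u => u ^ (κ - 1) * Real.exp (-u) with hg
  have hgmeas : Measurable g := by
    apply Measurable.mul
    · exact (measurable_id.pow_const _)
    · exact (measurable_id.neg.exp)
  -- substitution x ↦ α x^2
  have key : (∫ x in (0:ℝ)..Real.sqrt z, (2 * α * x) • (g ∘ (fun x => α * x ^ 2)) x)
      = ∫ u in (α * (0:ℝ) ^ 2)..(α * (Real.sqrt z) ^ 2), g u := by
    apply intervalIntegral.integral_comp_smul_deriv''' (f := fun x => α * x ^ 2)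
      (f' := fun x => 2 * α * x)
    · fun_prop
    · intro x hx
      have : HasDerivAt (fun x : ℝ => α * x ^ 2) (2 * α * x) x := by
        simpa [mul_comm, mul_assoc, mul_left_comm] using
          ((hasDerivAt_pow 2 x).const_mul α)
      exact this.hasDerivWithinAt
    · -- continuity of g on image of Ioo
      apply ContinuousOn.mono (s := Set.Ioi (0:ℝ))
      · intro u hu
        apply ContinuousWithinAt.mul
        · exact (Real.continuousAt_rpow_const u _ (Or.inl (ne_of_gt hu))).continuousWithinAt
        · exact (Real.continuous_exp.comp continuous_neg).continuousWithinAt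
      · rintro _ ⟨x, hx, rfl⟩
        simp only [Set.mem_Ioo, min_eq_left hrz, max_eq_right hrz] at hx
        have : 0 < x := hx.1
        exact Set.mem_Ioi.mpr (by positivity)
    · -- integrability of g on image of uIcc
      apply MeasureTheory.IntegrableOn.mono_set (t := Set.Icc (0:ℝ) (α * z))
      · -- IntegrableOn g (Icc 0 (α z))
        have hb : IntegrableOn (fun u : ℝ => u ^ (κ - 1)) (Set.Icc (0:ℝ) (α * z)) := by
          rw [integrableOn_Icc_iff_integrableOn_Ioc' (by simp)]
          have := intervalIntegral.intervalIntegrable_rpow' (a := 0) (b := α * z)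
            (r := κ - 1) (by rw [hκ]; push_cast; linarith [Nat.cast_nonneg (α := ℝ) l])
          have h0z : (0:ℝ) ≤ α * z := by positivity
          rw [intervalIntegrable_iff, Set.uIoc_of_le h0z] at this
          exact this
        apply hb.integrable.mono (hgmeas.aestronglyMeasurable.restrict)
        filter_upwards [MeasureTheory.ae_restrict_mem measurableSet_Icc] with u hu
        rw [hg]
        simp only [norm_mul, Real.norm_eq_abs]
        have h1 : |Real.exp (-u)| ≤ 1 := by
          rw [abs_of_pos (Real.exp_pos _)]
          exact Real.exp_le_one_iff.mpr (by linarith [hu.1])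
        calc |u ^ (κ - 1)| * |Real.exp (-u)| ≤ |u ^ (κ - 1)| * 1 := by
              exact mul_le_mul_of_nonneg_left h1 (abs_nonneg _)
          _ = ‖u ^ (κ - 1)‖ := by rw [mul_one, Real.norm_eq_abs]
      · rintro _ ⟨x, hx, rfl⟩
        rw [Set.uIcc_of_le hrz] at hx
        constructor
        · positivity
        · have h1 : x ^ 2 ≤ z := by
            have := hx.2
            calc x ^ 2 ≤ (Real.sqrt z) ^ 2 := by
                  apply sq_le_sq' (by linarith [hx.1]) this
              _ = z := Real.sq_sqrt hz
          exact mul_le_mul_of_nonneg_left h1 hα.le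
    · -- integrability of the substituted integrand
      apply MeasureTheory.Integrable.congr
        (f := fun x : ℝ => α ^ κ * (2 * x ^ (2 * l) * Real.exp (-(α * x ^ 2))))
      · apply Continuous.integrableOn_uIcc
        fun_prop
      · rw [Set.uIcc_of_le hrz]
        have : ∀ x ∈ Set.Ioc (0:ℝ) (Real.sqrt z),
            α ^ κ * (2 * x ^ (2 * l) * Real.exp (-(α * x ^ 2)))
              = (2 * α * x) • (g ∘ fun x => α * x ^ 2) x := by
          intro x hx
          have hx0 : 0 < x := hx.1
          rw [hg]
          simp only [Function.comp_apply, smul_eq_mul]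
          have h1 : (α * x ^ 2) ^ (κ - 1) = α ^ (κ - 1) * (x ^ 2) ^ (κ - 1) :=
            Real.mul_rpow hα.le (by positivity)
          have h2 : (x ^ 2 : ℝ) ^ (κ - 1) = x ^ (2 * (κ - 1)) := by
            rw [← Real.rpow_natCast x 2, ← Real.rpow_mul hx0.le]
            norm_num
          have h3 : x * x ^ (2 * (κ - 1)) = x ^ ((2 * l : ℕ) : ℝ) := by
            rw [mul_comm, ← Real.rpow_add_one hx0.ne']
            congr 1
            rw [hκ]; push_cast; ring
          have h4 : α * α ^ (κ - 1) = α ^ κ := by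
            rw [mul_comm, ← Real.rpow_add_one hα.ne']
            congr 1; rw [hκ]; ring
          rw [h1, h2]
          rw [Real.rpow_natCast x (2*l)] at h3
          calc α ^ κ * (2 * x ^ (2 * l) * Real.exp (-(α * x ^ 2)))
              = 2 * (α * α ^ (κ-1)) * (x * x ^ (2*(κ-1))) * Real.exp (-(α * x^2)) := by
                rw [h4, h3]; ring
            _ = 2 * α * x * (α ^ (κ - 1) * x ^ (2*(κ-1)) * Real.exp (-(α * x ^ 2))) := by
                ring
        -- a.e. equality on Icc: differ at most at 0
        have hne : ∀ᵐ (x : ℝ) ∂MeasureTheory.volume, x ≠ 0 := by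
          rw [MeasureTheory.ae_iff]
          simp
        filter_upwards [MeasureTheory.ae_restrict_mem measurableSet_Icc,
          MeasureTheory.ae_restrict_of_ae hne] with x hx hx0
        exact this x ⟨lt_of_le_of_ne hx.1 (Ne.symm hx0), hx.2⟩
  -- now rewrite both sides
  have h0 : α * (0:ℝ) ^ 2 = 0 := by ring
  have hz2 : α * (Real.sqrt z) ^ 2 = α * z := by rw [Real.sq_sqrt hz]
  rw [h0, hz2] at key
  rw [lowerIncGamma]
  rw [← key]
  rw [← intervalIntegral.integral_const_mul]
  apply intervalIntegral.integral_congr_ae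
  rw [Set.uIoc_of_le hrz]
  filter_upwards with x hx
  have hx0 : 0 < x := hx.1
  -- same pointwise computation as above
  rw [hg]
  simp only [Function.comp_apply, smul_eq_mul]
  have h1 : (α * x ^ 2) ^ (κ - 1) = α ^ (κ - 1) * (x ^ 2) ^ (κ - 1) :=
    Real.mul_rpow hα.le (by positivity)
  have h2 : (x ^ 2 : ℝ) ^ (κ - 1) = x ^ (2 * (κ - 1)) := by
    rw [← Real.rpow_natCast x 2, ← Real.rpow_mul hx0.le]
    norm_num
  have h3 : x * x ^ (2 * (κ - 1)) = x ^ ((2 * l : ℕ) : ℝ) := by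
    rw [mul_comm, ← Real.rpow_add_one hx0.ne']
    congr 1
    rw [hκ]; push_cast; ring
  have h4 : α * α ^ (κ - 1) = α ^ κ := by
    rw [mul_comm, ← Real.rpow_add_one hα.ne']
    congr 1; rw [hκ]; ring
  rw [h1, h2]
  rw [Real.rpow_natCast x (2*l)] at h3
  calc (2 * α * x) * (α ^ (κ-1) * x ^ (2*(κ-1)) * Real.exp (-(α * x ^ 2)))
      = 2 * (α * α ^ (κ-1)) * (x * x ^ (2*(κ-1))) * Real.exp (-(α * x^2)) := by ring
    _ = α ^ κ * (2 * x ^ (2 * l) * Real.exp (-(α * x ^ 2))) := by rw [h4, h3]; ring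

lemma mixCoeff_nonneg {s : ℝ} (hs : 0 < s) (m : ℝ) (l : ℕ) : 0 ≤ mixCoeff m s l := by
  unfold mixCoeff
  have h1 : (0:ℝ) < (2*s^2) ^ ((2*(l:ℝ))+1/2) := Real.rpow_pos_of_pos (by positivity) _
  have h2 : (0:ℝ) < Real.Gamma ((l:ℝ)+1/2) := Real.Gamma_pos_of_pos (by positivity)
  have h3 : (0:ℝ) < (Nat.factorial l : ℝ) := by positivity
  have h0 : (0:ℝ) ≤ m ^ (2*l) := by rw [pow_mul]; positivity
  exact div_nonneg (mul_nonneg (Real.exp_pos _).le h0)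
    (mul_nonneg (mul_nonneg h1.le h3.le) h2.le)

lemma gauss_term {s : ℝ} (hs : 0 < s) (α m h : ℝ) :
    gaussianPDFReal m (⟨s^2, sq_nonneg s⟩ : ℝ≥0) h *
        Real.exp ((1/(2*s^2) - α) * h^2)
      = (Real.exp (-m^2/(2*s^2)) / (s * Real.sqrt (2*π))) *
          (Real.exp (m*h/s^2) * Real.exp (-(α*h^2))) := by
  have h1 : Real.sqrt (2*π*(s^2)) = s * Real.sqrt (2*π) := by
    rw [mul_comm (2*π) (s^2), Real.sqrt_mul (sq_nonneg s), Real.sqrt_sq hs.le]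
  have hA : gaussianPDFReal m (⟨s^2, sq_nonneg s⟩ : ℝ≥0) h
      = (s * Real.sqrt (2*π))⁻¹ * Real.exp (-(h-m)^2/(2*s^2)) := by
    unfold gaussianPDFReal
    show (Real.sqrt (2 * π * s ^ 2))⁻¹ * Real.exp (-(h - m) ^ 2 / (2 * s ^ 2)) = _
    rw [h1]
  rw [hA, mul_assoc, ← Real.exp_add]
  have hs2 : (s:ℝ)^2 ≠ 0 := by positivity
  rw [show -(h-m)^2/(2*s^2) + (1/(2*s^2)-α)*h^2
      = (-m^2/(2*s^2)) + (m*h/s^2 + -(α*h^2)) by field_simp; ring]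
  rw [Real.exp_add, Real.exp_add]
  ring

lemma seriesA {s α z : ℝ} (hs : 0 < s) (hα : 0 < α) (hz : 0 ≤ z) (m : ℝ) :
    (∑' l : ℕ, mixCoeff m s l / α ^ ((l:ℝ) + 1/2) *
        lowerIncGamma ((l:ℝ) + 1/2) (α * z))
    = ∫ h in (-Real.sqrt z)..Real.sqrt z,
        gaussianPDFReal m (⟨s^2, sq_nonneg s⟩ : ℝ≥0) h *
          Real.exp ((1/(2*s^2) - α) * h^2) := by
  set a := Real.sqrt z with ha
  have hrz : 0 ≤ a := Real.sqrt_nonneg z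
  set C : ℝ := Real.exp (-m^2/(2*s^2)) / (s * Real.sqrt (2*π)) with hC
  set F : ℕ → ℝ → ℝ :=
    fun l h => 2 * Real.exp (-(α * h^2)) * (mixCoeff m s l * h ^ (2*l)) with hF
  -- each term is a set integral
  have hterm : ∀ l : ℕ, mixCoeff m s l / α ^ ((l:ℝ) + 1/2) *
      lowerIncGamma ((l:ℝ) + 1/2) (α * z)
      = ∫ h in Set.Ioc (0:ℝ) a, F l h := by
    intro l
    rw [lig_eq hα hz l]
    have hαpos : (0:ℝ) < α ^ ((l:ℝ) + 1/2) := Real.rpow_pos_of_pos hα _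
    rw [← mul_assoc, div_mul_cancel₀ _ hαpos.ne']
    rw [← intervalIntegral.integral_const_mul]
    rw [intervalIntegral.integral_of_le hrz]
    apply MeasureTheory.setIntegral_congr_fun measurableSet_Ioc
    intro h _
    rw [hF]; ring
  rw [tsum_congr hterm]
  -- interchange sum and integral
  have hcont : ∀ l : ℕ, Continuous (F l) := by
    intro l; rw [hF]; fun_prop
  have hFint : ∀ l : ℕ, MeasureTheory.Integrable (F l)
      (MeasureTheory.volume.restrict (Set.Ioc (0:ℝ) a)) := by
    intro l
    exact (hcont l).integrableOn_Ioc
  have hsummix : Summable (fun l : ℕ => mixCoeff m s l * a ^ (2*l)) :=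
    (hasSum_mix hs m a).summable
  have hFsum : Summable (fun l : ℕ =>
      ∫ h, ‖F l h‖ ∂(MeasureTheory.volume.restrict (Set.Ioc (0:ℝ) a))) := by
    refine Summable.of_nonneg_of_le
      (fun l => MeasureTheory.integral_nonneg (fun h => norm_nonneg _))
      (fun l => ?_) ((hsummix.mul_left 2).mul_left a)
    · 
      have hb : ∀ h ∈ Set.Ioc (0:ℝ) a, ‖F l h‖ ≤ 2 * (mixCoeff m s l * a ^ (2*l)) := by
        intro h hh
        rw [hF]
        have h1 : 0 ≤ mixCoeff m s l := mixCoeff_nonneg hs m l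
        have h2 : Real.exp (-(α * h^2)) ≤ 1 :=
          Real.exp_le_one_iff.mpr (by nlinarith [sq_nonneg h, hα.le, hh.1.le])
        have h3 : h ^ (2*l) ≤ a ^ (2*l) :=
          pow_le_pow_left₀ hh.1.le hh.2 _
        have h4 : (0:ℝ) ≤ h ^ (2*l) := by rw [pow_mul]; positivity
        rw [Real.norm_eq_abs, abs_of_nonneg (mul_nonneg (by positivity)
          (mul_nonneg h1 (by rw [pow_mul]; positivity)))]
        calc 2 * Real.exp (-(α * h^2)) * (mixCoeff m s l * h ^ (2*l))
            ≤ 2 * 1 * (mixCoeff m s l * a ^ (2*l)) := by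
              apply mul_le_mul
              · nlinarith [Real.exp_pos (-(α * h^2))]
              · exact mul_le_mul_of_nonneg_left h3 h1
              · exact mul_nonneg h1 h4
              · positivity
          _ = 2 * (mixCoeff m s l * a ^ (2*l)) := by ring
      calc (∫ h, ‖F l h‖ ∂(MeasureTheory.volume.restrict (Set.Ioc (0:ℝ) a)))
          ≤ ∫ _, 2 * (mixCoeff m s l * a ^ (2*l))
              ∂(MeasureTheory.volume.restrict (Set.Ioc (0:ℝ) a)) := by
            apply MeasureTheory.integral_mono_of_nonneg
            · exact Filter.Eventually.of_forall (fun h => norm_nonneg _)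
            · exact MeasureTheory.integrable_const _
            · filter_upwards [MeasureTheory.ae_restrict_mem measurableSet_Ioc] with h hh
              exact hb h hh
        _ = (MeasureTheory.volume (Set.Ioc (0:ℝ) a)).toReal •
              (2 * (mixCoeff m s l * a ^ (2*l))) := by
            rw [MeasureTheory.integral_const]
            simp
            left; rw [ENNReal.toReal_ofReal hrz, max_eq_left hrz]
        _ = a * (2 * (mixCoeff m s l * a ^ (2*l))) := by
            rw [Real.volume_Ioc, smul_eq_mul]
            congr 1
            rw [ENNReal.toReal_ofReal (by linarith)]
            ring
  rw [MeasureTheory.integral_tsum_of_summable_integral_norm hFint hFsum]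
  -- pointwise sum
  have hpt : ∀ h : ℝ, (∑' l : ℕ, F l h)
      = 2 * C * Real.cosh (m * h / s^2) * Real.exp (-(α * h^2)) := by
    intro h
    have := ((hasSum_mix hs m h).mul_left (2 * Real.exp (-(α * h^2)))).tsum_eq
    rw [hF]
    rw [this]
    ring
  rw [MeasureTheory.integral_congr_ae (Filter.Eventually.of_forall
    (fun h => hpt h))]
  -- symmetrize
  have hGcont : Continuous (fun h : ℝ => gaussianPDFReal m (⟨s^2, sq_nonneg s⟩ : ℝ≥0) h *
      Real.exp ((1/(2*s^2) - α) * h^2)) := by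
    unfold gaussianPDFReal
    fun_prop
  set G : ℝ → ℝ := fun h => gaussianPDFReal m (⟨s^2, sq_nonneg s⟩ : ℝ≥0) h *
      Real.exp ((1/(2*s^2) - α) * h^2) with hG
  have hsplit : (∫ h in (-a)..a, G h)
      = (∫ h in (-a)..(0:ℝ), G h) + ∫ h in (0:ℝ)..a, G h :=
    (intervalIntegral.integral_add_adjacent_intervals
      (hGcont.intervalIntegrable _ _) (hGcont.intervalIntegrable _ _)).symm
  have hneg : (∫ h in (0:ℝ)..a, G (-h)) = ∫ h in (-a)..(0:ℝ), G h := by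
    simpa using intervalIntegral.integral_comp_neg (a := (0:ℝ)) (b := a) G
  have hc : Continuous fun h : ℝ => G (-h) := hGcont.comp continuous_neg
  have hadd : (∫ h in (0:ℝ)..a, (G (-h) + G h))
      = (∫ h in (0:ℝ)..a, G (-h)) + ∫ h in (0:ℝ)..a, G h :=
    intervalIntegral.integral_add (hc.intervalIntegrable _ _)
      (hGcont.intervalIntegrable _ _)
  have hfold : (∫ h in (-a)..a, G h) = ∫ h in (0:ℝ)..a, (G (-h) + G h) := by
    rw [hsplit, hadd, hneg]
  have hptG : ∀ h : ℝ, G (-h) + G h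
      = 2 * C * Real.cosh (m * h / s^2) * Real.exp (-(α * h^2)) := by
    intro h
    rw [hG]
    simp only
    rw [gauss_term hs α m (-h), gauss_term hs α m h]
    rw [Real.cosh_eq]
    have hexp : m * -h / s^2 = -(m * h / s^2) := by ring
    rw [hexp]
    have h2 : (-h)^2 = h^2 := by ring
    rw [h2]
    rw [hC]
    ring
  rw [hfold]
  rw [intervalIntegral.integral_congr (fun h _ => hptG h)]
  rw [intervalIntegral.integral_of_le hrz]

lemma expMeasure_Ioi (c : ℝ) :
    (MeasureTheory.volume.withDensity (exponentialPDF 1)) (Set.Ioi c)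
      = ENNReal.ofReal (Real.exp (-(max c 0))) := by
  have heq : MeasureTheory.volume.withDensity (exponentialPDF 1) = expMeasure 1 := rfl
  haveI : IsProbabilityMeasure (expMeasure 1) := isProbabilityMeasure_expMeasure one_pos
  have hIic : (MeasureTheory.volume.withDensity (exponentialPDF 1)) (Set.Iic c)
      = ENNReal.ofReal (if 0 ≤ c then 1 - Real.exp (-(1*c)) else 0) := by
    rw [MeasureTheory.withDensity_apply _ measurableSet_Iic]
    exact lintegral_exponentialPDF_eq_antiDeriv one_pos c
  have hcompl : Set.Ioi c = (Set.Iic c)ᶜ := by simp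
  rw [hcompl, heq]
  rw [MeasureTheory.prob_compl_eq_one_sub measurableSet_Iic]
  rw [← heq, hIic]
  by_cases hc : 0 ≤ c
  · rw [if_pos hc, max_eq_left hc, one_mul]
    rw [show (1:ℝ≥0∞) = ENNReal.ofReal 1 by simp]
    rw [← ENNReal.ofReal_sub _ (by
      have := Real.exp_le_one_iff.mpr (by linarith : -c ≤ 0)
      linarith)]
    congr 1
    ring
  · rw [if_neg hc, max_eq_right (by linarith)]
    simp

lemma survival {Ω : Type*} [MeasurableSpace Ω] (μ : MeasureTheory.Measure Ω)
    [MeasureTheory.IsProbabilityMeasure μ]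
    {m s γh γt t : ℝ} (hs : 0 < s) (hγh : 0 < γh) (hγt : 0 < γt) (ht : 0 < t)
    (X Y : Ω → ℝ) (hX : Measurable X) (hY : Measurable Y)
    (hind : IndepFun X Y μ)
    (hXlaw : μ.map X = MeasureTheory.volume.withDensity (exponentialPDF 1))
    (hYlaw : μ.map Y = gaussianReal m (⟨s^2, sq_nonneg s⟩ : ℝ≥0)) :
    (μ {ω | t < γh * X ω + γt * (Y ω)^2}).toReal
      = 1 - (∫ h in (-(Real.sqrt (t/γt)))..(Real.sqrt (t/γt)),
              gaussianPDFReal m (⟨s^2, sq_nonneg s⟩ : ℝ≥0) h)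
        + Real.exp (-t/γh) *
            ∫ h in (-(Real.sqrt (t/γt)))..(Real.sqrt (t/γt)),
              gaussianPDFReal m (⟨s^2, sq_nonneg s⟩ : ℝ≥0) h *
                Real.exp (γt/γh * h^2) := by
  set v : ℝ≥0 := (⟨s^2, sq_nonneg s⟩ : ℝ≥0) with hvdef
  have hv : v ≠ 0 := by
    intro hc
    have h2 : ((v : ℝ≥0) : ℝ) = 0 := by rw [hc]; simp
    have h3 : (s:ℝ)^2 = 0 := h2
    exact (pow_ne_zero 2 hs.ne') h3
  set ExpM := MeasureTheory.volume.withDensity (exponentialPDF 1) with hExpM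
  set G := gaussianReal m v with hGdef
  haveI : MeasureTheory.IsProbabilityMeasure ExpM := by
    rw [hExpM]
    exact isProbabilityMeasure_expMeasure one_pos
  set S : Set (ℝ × ℝ) := {p | t < γh * p.1 + γt * p.2^2} with hS
  have hSm : MeasurableSet S := by
    apply measurableSet_lt measurable_const
    fun_prop
  have hmap : μ.map (fun ω => (X ω, Y ω)) = ExpM.prod G := by
    rw [← hXlaw, ← hYlaw]
    exact (indepFun_iff_map_prod_eq_prod_map_map hX.aemeasurable hY.aemeasurable).mp hind
  have hev : μ {ω | t < γh * X ω + γt * (Y ω)^2} = (ExpM.prod G) S := by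
    rw [← hmap, MeasureTheory.Measure.map_apply (hX.prodMk hY) hSm]
    rfl
  set g : ℝ → ℝ := fun h => Real.exp (-(max ((t - γt*h^2)/γh) 0)) with hg
  have hgcont : Continuous g := by
    rw [hg]; fun_prop
  have hg01 : ∀ h, 0 ≤ g h ∧ g h ≤ 1 := by
    intro h
    constructor
    · exact (Real.exp_pos _).le
    · apply Real.exp_le_one_iff.mpr
      simp [le_max_iff]
  have hslice : (ExpM.prod G) S = ∫⁻ h, ENNReal.ofReal (g h) ∂G := by
    rw [MeasureTheory.Measure.prod_apply_symm hSm]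
    congr 1
    funext h
    have hpre : (fun x => (x, h)) ⁻¹' S = Set.Ioi ((t - γt*h^2)/γh) := by
      ext x
      simp only [Set.mem_preimage, Set.mem_Ioi, hS, Set.mem_setOf_eq]
      rw [div_lt_iff₀ hγh]
      constructor <;> intro hh <;> nlinarith
    rw [hpre]
    exact expMeasure_Ioi _
  have htoReal : (μ {ω | t < γh * X ω + γt * (Y ω)^2}).toReal = ∫ h, g h ∂G := by
    rw [hev, hslice]
    rw [MeasureTheory.integral_eq_lintegral_of_nonneg_ae
      (Filter.Eventually.of_forall (fun h => (hg01 h).1))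
      hgcont.aestronglyMeasurable]
  rw [htoReal]
  -- unfold the gaussian density
  have hGd : G = MeasureTheory.volume.withDensity (gaussianPDF m v) :=
    gaussianReal_of_var_ne_zero m hv
  have hpm : Measurable (fun x => (gaussianPDFReal m v x).toNNReal) :=
    (measurable_gaussianPDFReal m v).real_toNNReal
  have hwd : ∫ h, g h ∂G = ∫ h, (gaussianPDFReal m v h).toNNReal • g h := by
    rw [hGd]
    exact integral_withDensity_eq_integral_smul hpm g
  rw [hwd]
  have hsmul : ∀ h, (gaussianPDFReal m v h).toNNReal • g h
      = gaussianPDFReal m v h * g h := by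
    intro h
    rw [NNReal.smul_def, Real.coe_toNNReal _ (gaussianPDFReal_nonneg m v h), smul_eq_mul]
  rw [MeasureTheory.integral_congr_ae (Filter.Eventually.of_forall hsmul)]
  -- split the integral
  set b := Real.sqrt (t/γt) with hb
  have hb0 : 0 ≤ b := Real.sqrt_nonneg _
  have hbsq : b^2 = t/γt := Real.sq_sqrt (by positivity)
  set I : Set ℝ := Set.Ioo (-b) b with hI
  have hIm : MeasurableSet I := measurableSet_Ioo
  set P : ℝ → ℝ := gaussianPDFReal m v with hP
  have hPcont : Continuous P := by
    rw [hP, gaussianPDFReal_def]; fun_prop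
  have hPint : MeasureTheory.Integrable P := integrable_gaussianPDFReal m v
  have hPg_int : MeasureTheory.Integrable (fun h => P h * g h) := by
    apply hPint.mono ((hPcont.mul hgcont).aestronglyMeasurable)
    filter_upwards with h
    rw [Real.norm_eq_abs, Real.norm_eq_abs, Pi.mul_apply, abs_mul]
    calc |P h| * |g h| ≤ |P h| * 1 := by
          apply mul_le_mul_of_nonneg_left _ (abs_nonneg _)
          rw [abs_of_nonneg (hg01 h).1]
          exact (hg01 h).2
      _ = |P h| := mul_one _
  have hsplit : ∫ h, P h * g h = (∫ h in I, P h * g h) + ∫ h in Iᶜ, P h * g h :=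
    (MeasureTheory.integral_add_compl hIm hPg_int).symm
  -- on the complement, g = 1
  have hcompl_eq : ∫ h in Iᶜ, P h * g h = ∫ h in Iᶜ, P h := by
    apply MeasureTheory.setIntegral_congr_fun hIm.compl
    intro h hh
    have hh2 : t ≤ γt * h^2 := by
      simp only [hI, Set.mem_compl_iff, Set.mem_Ioo, not_and_or, not_lt] at hh
      have habs : b ≤ |h| := by
        rcases hh with hh | hh
        · rw [abs_of_nonpos (by linarith)]; linarith
        · calc b ≤ h := hh
            _ ≤ |h| := le_abs_self h
      have : b^2 ≤ h^2 := by
        calc b^2 ≤ |h|^2 := by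
              apply pow_le_pow_left₀ hb0 habs
          _ = h^2 := sq_abs h
      rw [hbsq] at this
      rw [div_le_iff₀ hγt] at this
      linarith
    have : g h = 1 := by
      rw [hg]
      simp only
      rw [max_eq_right (by
        apply div_nonpos_of_nonpos_of_nonneg _ hγh.le
        linarith)]
      simp
    simp only [this, mul_one]
  have hcompl_val : ∫ h in Iᶜ, P h = 1 - ∫ h in I, P h := by
    have := MeasureTheory.integral_add_compl hIm hPint
    have htot : ∫ h, P h = 1 := integral_gaussianPDFReal_eq_one m hv
    linarith
  -- on I, g = exp(-t/γh) * exp(γt/γh h²)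
  have hI_eq : ∫ h in I, P h * g h
      = Real.exp (-t/γh) * ∫ h in I, P h * Real.exp (γt/γh * h^2) := by
    rw [← MeasureTheory.integral_const_mul]
    apply MeasureTheory.setIntegral_congr_fun hIm
    intro h hh
    have hh2 : γt * h^2 < t := by
      simp only [hI, Set.mem_Ioo] at hh
      have : h^2 < b^2 := by
        rw [← sq_abs h]
        apply pow_lt_pow_left₀ (abs_lt.mpr hh) (abs_nonneg h)
        norm_num
      rw [hbsq, lt_div_iff₀ hγt] at this
      linarith
    have hgval : g h = Real.exp (-t/γh) * Real.exp (γt/γh * h^2) := by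
      rw [hg]
      simp only
      rw [max_eq_left (div_nonneg (by linarith) hγh.le)]
      rw [← Real.exp_add]
      congr 1
      field_simp
      ring
    simp only [hgval]
    ring
  rw [hsplit, hcompl_eq, hcompl_val, hI_eq]
  -- convert to interval integrals
  have hIoo : ∀ f : ℝ → ℝ, (∫ h in (-b)..b, f h) = ∫ h in I, f h := by
    intro f
    rw [intervalIntegral.integral_of_le (by linarith), hI,
      MeasureTheory.integral_Ioc_eq_integral_Ioo]
  rw [hIoo, hIoo]
  ring

lemma survival_closed {Ω : Type*} [MeasurableSpace Ω] (μ : MeasureTheory.Measure Ω)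
    [MeasureTheory.IsProbabilityMeasure μ]
    {m s γh γt t : ℝ} (hs : 0 < s) (hγh : 0 < γh) (hγt : 0 < γt) (ht : 0 < t)
    (hcond : 2 * s^2 * γt < γh)
    (X Y : Ω → ℝ) (hX : Measurable X) (hY : Measurable Y)
    (hind : IndepFun X Y μ)
    (hXlaw : μ.map X = MeasureTheory.volume.withDensity (exponentialPDF 1))
    (hYlaw : μ.map Y = gaussianReal m (⟨s^2, sq_nonneg s⟩ : ℝ≥0)) :
    (μ {ω | t < γh * X ω + γt * (Y ω)^2}).toReal
      = 1 - (∑' l : ℕ, mixCoeff m s l / (1/(2*s^2)) ^ ((l:ℝ) + 1/2) *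
              lowerIncGamma ((l:ℝ) + 1/2) ((1/(2*s^2)) * t / γt))
        + Real.exp (-t/γh) *
            ∑' l : ℕ, mixCoeff m s l / (1/(2*s^2) - γt/γh) ^ ((l:ℝ) + 1/2) *
              lowerIncGamma ((l:ℝ) + 1/2) ((1/(2*s^2) - γt/γh) * t / γt) := by
  rw [survival μ hs hγh hγt ht X Y hX hY hind hXlaw hYlaw]
  have hz : (0:ℝ) ≤ t / γt := by positivity
  have hα1 : (0:ℝ) < 1/(2*s^2) := by positivity
  have hα2 : (0:ℝ) < 1/(2*s^2) - γt/γh := by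
    rw [sub_pos, div_lt_div_iff₀ hγh (by positivity)]
    linarith
  have hA : (∑' l : ℕ, mixCoeff m s l / (1/(2*s^2)) ^ ((l:ℝ) + 1/2) *
        lowerIncGamma ((l:ℝ) + 1/2) ((1/(2*s^2)) * t / γt))
      = ∫ h in (-(Real.sqrt (t/γt)))..(Real.sqrt (t/γt)),
          gaussianPDFReal m (⟨s^2, sq_nonneg s⟩ : ℝ≥0) h := by
    rw [show (1/(2*s^2)) * t / γt = (1/(2*s^2)) * (t/γt) from mul_div_assoc _ _ _]
    rw [seriesA hs hα1 hz m]
    apply intervalIntegral.integral_congr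
    intro h _
    simp
  have hB : (∑' l : ℕ, mixCoeff m s l / (1/(2*s^2) - γt/γh) ^ ((l:ℝ) + 1/2) *
        lowerIncGamma ((l:ℝ) + 1/2) ((1/(2*s^2) - γt/γh) * t / γt))
      = ∫ h in (-(Real.sqrt (t/γt)))..(Real.sqrt (t/γt)),
          gaussianPDFReal m (⟨s^2, sq_nonneg s⟩ : ℝ≥0) h *
            Real.exp (γt/γh * h^2) := by
    rw [show (1/(2*s^2) - γt/γh) * t / γt = (1/(2*s^2) - γt/γh) * (t/γt) from
      mul_div_assoc _ _ _]
    rw [seriesA hs hα2 hz m]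
    apply intervalIntegral.integral_congr
    intro h _
    simp only [sub_sub_cancel]
  rw [hA, hB]


/-- Closed-form outage probability of the RIS-aided doubly dirty MAC: the SNR of user
`i` is `γᵢ = γ̂ᵢ Eᵢ + γ̃ᵢ Hᵢ²` with `Eᵢ` rate-1 exponential and `Hᵢ ~ N(mᵢ, sᵢ²)`, all
mutually independent, and the outage probability at target rate `R_t` factorizes into
the product of the per-user survival functions expressed via incomplete gamma series. -/
theorem outage_doubly_dirty_MAC_closed_form {Ω : Type*} [MeasurableSpace Ω]
    (μ : Measure Ω) [IsProbabilityMeasure μ]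
    (m s γhat γtil : Fin 2 → ℝ)
    (hs : ∀ i, 0 < s i) (hγhat : ∀ i, 0 < γhat i) (hγtil : ∀ i, 0 < γtil i)
    (hcond : ∀ i, 2 * (s i) ^ 2 * γtil i < γhat i)
    (H E : Fin 2 → Ω → ℝ) (hH : ∀ i, Measurable (H i)) (hE : ∀ i, Measurable (E i))
    (hindep : iIndepFun ![E 0, E 1, H 0, H 1] μ)
    (hHlaw : ∀ i, μ.map (H i) = gaussianReal (m i) (⟨(s i) ^ 2, sq_nonneg (s i)⟩ : ℝ≥0))
    (hElaw : ∀ i, μ.map (E i) = volume.withDensity (exponentialPDF 1)) :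
    ∀ Rt : ℝ, 0 < Rt →
      (μ {ω | Real.logb 2 (1 + min (γhat 0 * E 0 ω + γtil 0 * (H 0 ω) ^ 2)
            (γhat 1 * E 1 ω + γtil 1 * (H 1 ω) ^ 2)) ≤ Rt}).toReal
        = 1 - ∏ i : Fin 2,
            (1 - (∑' l : ℕ, mixCoeff (m i) (s i) l /
                    (1 / (2 * (s i) ^ 2)) ^ ((l : ℝ) + 1 / 2) *
                    lowerIncGamma ((l : ℝ) + 1 / 2)
                      ((1 / (2 * (s i) ^ 2)) * ((2 : ℝ) ^ Rt - 1) / γtil i))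
              + Real.exp (-((2 : ℝ) ^ Rt - 1) / γhat i) *
                  ∑' l : ℕ, mixCoeff (m i) (s i) l /
                    (1 / (2 * (s i) ^ 2) - γtil i / γhat i) ^ ((l : ℝ) + 1 / 2) *
                    lowerIncGamma ((l : ℝ) + 1 / 2)
                      ((1 / (2 * (s i) ^ 2) - γtil i / γhat i) *
                        ((2 : ℝ) ^ Rt - 1) / γtil i)) := by
  intro Rt hRt
  set t : ℝ := (2:ℝ) ^ Rt - 1 with htdef
  have ht : 0 < t := by
    rw [htdef, sub_pos]
    exact (Real.one_lt_rpow_iff_of_pos (by norm_num)).mpr (Or.inl ⟨one_lt_two, hRt⟩)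
  -- the SNR functions
  set γ : Fin 2 → Ω → ℝ := fun i ω => γhat i * E i ω + γtil i * (H i ω)^2 with hγ
  have hγmeas : ∀ i, Measurable (γ i) := by
    intro i
    apply Measurable.add
    · exact (hE i).const_mul _
    · exact (((hH i).pow_const 2).const_mul _)
  -- a.e. rewrite of the event
  have hEnn : ∀ i : Fin 2, ∀ᵐ ω ∂μ, 0 ≤ E i ω := by
    intro i
    rw [MeasureTheory.ae_iff]
    have hset : {ω | ¬ 0 ≤ E i ω} = E i ⁻¹' (Set.Iio 0) := by
      ext ω; simp [not_le]
    rw [hset, ← MeasureTheory.Measure.map_apply (hE i) measurableSet_Iio, hElaw i,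
      MeasureTheory.withDensity_apply _ measurableSet_Iio]
    rw [MeasureTheory.setLIntegral_congr_fun measurableSet_Iio
      (fun x (hx : x ∈ Set.Iio 0) => exponentialPDF_of_neg hx)]
    simp
  have hev : μ {ω | Real.logb 2 (1 + min (γ 0 ω) (γ 1 ω)) ≤ Rt}
      = μ {ω | min (γ 0 ω) (γ 1 ω) ≤ t} := by
    apply MeasureTheory.measure_congr
    apply Filter.eventuallyEq_set.mpr
    filter_upwards [hEnn 0, hEnn 1] with ω h0 h1
    have hγ0 : 0 ≤ γ 0 ω := by
      rw [hγ]; simp only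
      have := sq_nonneg (H 0 ω)
      have := (hγhat 0).le
      have := (hγtil 0).le
      positivity
    have hγ1 : 0 ≤ γ 1 ω := by
      rw [hγ]; simp only
      have := sq_nonneg (H 1 ω)
      have := (hγhat 1).le
      have := (hγtil 1).le
      positivity
    have hpos : 0 < 1 + min (γ 0 ω) (γ 1 ω) := by
      rcases le_total (γ 0 ω) (γ 1 ω) with hle | hle
      · rw [min_eq_left hle]; linarith
      · rw [min_eq_right hle]; linarith
    show Real.logb 2 (1 + min (γ 0 ω) (γ 1 ω)) ≤ Rt ↔ min (γ 0 ω) (γ 1 ω) ≤ t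
    rw [Real.logb_le_iff_le_rpow one_lt_two hpos]
    constructor <;> intro hh <;> [skip; skip] <;> rw [htdef] at * <;> linarith
  -- independence of the two SNRs
  have hFmeas : ∀ i, Measurable (![E 0, E 1, H 0, H 1] i) := by
    intro i
    fin_cases i
    exacts [hE 0, hE 1, hH 0, hH 1]
  have hpair : IndepFun (fun ω => (E 0 ω, H 0 ω)) (fun ω => (E 1 ω, H 1 ω)) μ := by
    exact hindep.indepFun_prodMk_prodMk hFmeas 0 2 1 3
      (by decide) (by decide) (by decide) (by decide)
  have hφmeas : ∀ i : Fin 2, Measurable (fun p : ℝ × ℝ => γhat i * p.1 + γtil i * p.2^2) := by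
    intro i; fun_prop
  have hindγ : IndepFun (γ 0) (γ 1) μ := by
    have := hpair.comp (hφmeas 0) (hφmeas 1)
    exact this
  have hEH : ∀ i : Fin 2, IndepFun (E i) (H i) μ := by
    intro i
    fin_cases i
    · exact hindep.indepFun (i := 0) (j := 2) (by decide)
    · exact hindep.indepFun (i := 1) (j := 3) (by decide)
  -- factorize
  have hBmeas : ∀ i : Fin 2, MeasurableSet {ω | t < γ i ω} :=
    fun i => measurableSet_lt measurable_const (hγmeas i)
  have hfact : μ ({ω | t < γ 0 ω} ∩ {ω | t < γ 1 ω})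
      = μ {ω | t < γ 0 ω} * μ {ω | t < γ 1 ω} := by
    have h1 : {ω | t < γ 0 ω} = γ 0 ⁻¹' (Set.Ioi t) := rfl
    have h2 : {ω | t < γ 1 ω} = γ 1 ⁻¹' (Set.Ioi t) := rfl
    rw [h1, h2]
    exact hindγ.measure_inter_preimage_eq_mul _ _ measurableSet_Ioi measurableSet_Ioi
  have hcomplement : {ω | min (γ 0 ω) (γ 1 ω) ≤ t}
      = ({ω | t < γ 0 ω} ∩ {ω | t < γ 1 ω})ᶜ := by
    ext ω
    simp only [Set.mem_setOf_eq, Set.mem_compl_iff, Set.mem_inter_iff, not_and_or, not_lt]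
    exact min_le_iff
  -- per-user survival
  have hsurv : ∀ i : Fin 2, (μ {ω | t < γ i ω}).toReal
      = 1 - (∑' l : ℕ, mixCoeff (m i) (s i) l /
              (1 / (2 * (s i) ^ 2)) ^ ((l : ℝ) + 1 / 2) *
              lowerIncGamma ((l : ℝ) + 1 / 2) ((1 / (2 * (s i) ^ 2)) * t / γtil i))
        + Real.exp (-t / γhat i) *
            ∑' l : ℕ, mixCoeff (m i) (s i) l /
              (1 / (2 * (s i) ^ 2) - γtil i / γhat i) ^ ((l : ℝ) + 1 / 2) *
              lowerIncGamma ((l : ℝ) + 1 / 2)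
                ((1 / (2 * (s i) ^ 2) - γtil i / γhat i) * t / γtil i) := by
    intro i
    exact survival_closed μ (hs i) (hγhat i) (hγtil i) ht (hcond i)
      (E i) (H i) (hE i) (hH i) (hEH i) (hElaw i) (hHlaw i)
  -- put it together
  have hle1 : μ ({ω | t < γ 0 ω} ∩ {ω | t < γ 1 ω}) ≤ 1 := prob_le_one
  calc (μ {ω | Real.logb 2 (1 + min (γ 0 ω) (γ 1 ω)) ≤ Rt}).toReal
      = (μ ({ω | t < γ 0 ω} ∩ {ω | t < γ 1 ω})ᶜ).toReal := by rw [hev, hcomplement]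
    _ = ((1 : ℝ≥0∞) - μ ({ω | t < γ 0 ω} ∩ {ω | t < γ 1 ω})).toReal := by
        rw [MeasureTheory.prob_compl_eq_one_sub ((hBmeas 0).inter (hBmeas 1))]
    _ = 1 - (μ ({ω | t < γ 0 ω} ∩ {ω | t < γ 1 ω})).toReal := by
        rw [ENNReal.toReal_sub_of_le hle1 ENNReal.one_ne_top]
        simp
    _ = 1 - (μ {ω | t < γ 0 ω}).toReal * (μ {ω | t < γ 1 ω}).toReal := by
        rw [hfact, ENNReal.toReal_mul]
    _ = _ := by
        rw [Fin.prod_univ_two, hsurv 0, hsurv 1]
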